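/- Fix d ≥ 1, 1 ≤ m ≤ 2d−1 and n̲ = (n₂,…,n_m). The polynomial p_{d,n̲}(X) has at most one root of modulus strictly larger than 1, and such a root, if it exists, is real. -/

import Mathlib

/-!
Outside the unit disc, `p(z) = 0` amounts to `f(z) = 0` for
`f(z) = z - 1/z - c + ∑ᵢ 1/(z^{nᵢ} + 1)`, `c = d - 1`. Adding and subtracting `f(x) = 0` and
`f(y) = 0` for two distinct zeros gives, with weights `wᵢ = 1/((x^{nᵢ} + 1)(y^{nᵢ} + 1))` and
`σₖ(x, y) = ∑_{j<k} xʲ y^{k-1-j}`,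
`∑ wᵢ ((xy)^{nᵢ} - 1) = (x + y)(1 - 1/(xy)) - (2c - (m - 1))` and `∑ wᵢ σ_{nᵢ}(x, y) = 1 + 1/(xy)`.
When `x, y > 1` are real, or `y = x̄`, everything is real and the weights are positive, and the
termwise bound `(x + y)(xy - 1) σₖ(x, y) < (xy + 1)((xy)ᵏ - 1)` (for `y = x̄` reduced to
`x = y = |z|` by the triangle inequality) then forces `2c < m - 1`. Hence zeros outside the disc
are real, none lies below `-1` since `f < 0` there, and two distinct ones above `1` are excluded.
-/

open Polynomial Finset ComplexConjugate

variable {ι : Type*}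

noncomputable section

def pPoly [DecidableEq ι] {R : Type*} [CommRing R] (c : R) (I : Finset ι) (ν : ι → ℕ) :
    R[X] :=
  (X ^ 2 - C c * X - 1) * ∏ i ∈ I, (X ^ ν i + 1) +
    X * ∑ i ∈ I, ∏ j ∈ I.erase i, (X ^ ν j + 1)

/-- `pPoly c I ν` divided by `X * ∏ i ∈ I, (X ^ ν i + 1)`. -/
def pFun {K : Type*} [Field K] (c : K) (I : Finset ι) (ν : ι → ℕ) (z : K) : K :=
  z - z⁻¹ - c + ∑ i ∈ I, (z ^ ν i + 1)⁻¹

end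

section Field

variable {K : Type*} [Field K]

theorem map_pFun {L : Type*} [Field L] (f : K →+* L) (c : K) (I : Finset ι) (ν : ι → ℕ)
    (z : K) : f (pFun c I ν z) = pFun (f c) I ν (f z) := by
  simp [pFun, map_sum, map_inv₀]

variable {c : K} {I : Finset ι} {ν : ι → ℕ}

theorem aeval_pPoly [DecidableEq ι] {R : Type*} [CommRing R] [Algebra R K] (c : R) {z : K}
    (hz : z ≠ 0) (hI : ∀ i ∈ I, z ^ ν i + 1 ≠ 0) :
    aeval z (pPoly c I ν) = z * (∏ i ∈ I, (z ^ ν i + 1)) * pFun (algebraMap R K c) I ν z := by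
  have hsum : z * (∏ i ∈ I, (z ^ ν i + 1)) * ∑ i ∈ I, (z ^ ν i + 1)⁻¹ =
      z * ∑ i ∈ I, ∏ j ∈ I.erase i, (z ^ ν j + 1) := by
    rw [mul_assoc, mul_sum]
    congr 1
    refine sum_congr rfl fun i hi => ?_
    rw [← mul_prod_erase I _ hi, mul_comm, ← mul_assoc, inv_mul_cancel₀ (hI i hi), one_mul]
  simp only [pPoly, pFun, map_add, map_mul, map_sub, map_pow, map_one, map_prod, map_sum,
    aeval_X, aeval_C, mul_add, hsum]
  field_simp
  ring

theorem sum_inv_pow_add_one_of_pFun_eq_zero {x : K} (hx : pFun c I ν x = 0) :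
    ∑ i ∈ I, (x ^ ν i + 1)⁻¹ = c + x⁻¹ - x := by
  unfold pFun at hx
  linear_combination hx

theorem sum_mul_pow_sub_one_div_of_pFun_eq_zero {x y : K} (hx : pFun c I ν x = 0)
    (hy : pFun c I ν y = 0) (hx0 : x ≠ 0) (hy0 : y ≠ 0) (hxI : ∀ i ∈ I, x ^ ν i + 1 ≠ 0)
    (hyI : ∀ i ∈ I, y ^ ν i + 1 ≠ 0) :
    ∑ i ∈ I, ((x * y) ^ ν i - 1) / ((x ^ ν i + 1) * (y ^ ν i + 1)) =
      (x + y) * (1 - (x * y)⁻¹) - (2 * c - #I) := by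
  have hterm : ∀ i ∈ I, ((x * y) ^ ν i - 1) / ((x ^ ν i + 1) * (y ^ ν i + 1)) =
      1 - ((x ^ ν i + 1)⁻¹ + (y ^ ν i + 1)⁻¹) := fun i hi => by
    have := hxI i hi; have := hyI i hi
    field_simp
    ring
  rw [sum_congr rfl hterm, sum_sub_distrib, sum_add_distrib, sum_const, nsmul_one,
    sum_inv_pow_add_one_of_pFun_eq_zero hx, sum_inv_pow_add_one_of_pFun_eq_zero hy]
  field_simp
  ring

theorem sum_geom_sum₂_div_of_pFun_eq_zero {x y : K} (hx : pFun c I ν x = 0)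
    (hy : pFun c I ν y = 0) (hx0 : x ≠ 0) (hy0 : y ≠ 0) (hxI : ∀ i ∈ I, x ^ ν i + 1 ≠ 0)
    (hyI : ∀ i ∈ I, y ^ ν i + 1 ≠ 0) (hxy : x ≠ y) :
    ∑ i ∈ I,
        (∑ j ∈ range (ν i), x ^ j * y ^ (ν i - 1 - j)) / ((x ^ ν i + 1) * (y ^ ν i + 1)) =
      1 + (x * y)⁻¹ := by
  have hterm : ∀ i ∈ I, (x - y) *
      ((∑ j ∈ range (ν i), x ^ j * y ^ (ν i - 1 - j)) / ((x ^ ν i + 1) * (y ^ ν i + 1))) =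
      (y ^ ν i + 1)⁻¹ - (x ^ ν i + 1)⁻¹ := fun i hi => by
    have := hxI i hi; have := hyI i hi
    rw [mul_div_assoc', mul_comm, geom_sum₂_mul]
    field_simp
    ring
  apply mul_left_cancel₀ (sub_ne_zero.mpr hxy)
  rw [mul_sum, sum_congr rfl hterm, sum_sub_distrib, sum_inv_pow_add_one_of_pFun_eq_zero hx,
    sum_inv_pow_add_one_of_pFun_eq_zero hy]
  field_simp
  ring

end Field

theorem add_mul_pow_add_lt_mul_add_one_mul {x y : ℝ} (hx : 1 < x) (hy : 1 < y) (k j : ℕ) :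
    (x + y) * (x ^ k * y ^ j + x ^ j * y ^ k) < (x * y + 1) * ((x * y) ^ k + (x * y) ^ j) := by
  wlog hkj : k ≤ j generalizing k j
  · linarith [this j k (by omega)]
  obtain ⟨t, rfl⟩ := Nat.exists_eq_add_of_le hkj
  have hxt : 1 ≤ x ^ t := one_le_pow₀ hx.le
  have hyt : 1 ≤ y ^ t := one_le_pow₀ hy.le
  have hsign : 0 ≤ (x - x ^ t) * (y - y ^ t) := by
    rcases Nat.eq_zero_or_pos t with rfl | ht
    · nlinarith
    · exact mul_nonneg_of_nonpos_of_nonpos (by linarith [le_self_pow₀ hx.le ht.ne'])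
        (by linarith [le_self_pow₀ hy.le ht.ne'])
  -- the difference of the two sides is `(xy)^k ((x^{t+1}-1)(y^{t+1}-1) + (x-x^t)(y-y^t))`
  have hfac : 0 < (x * x ^ t - 1) * (y * y ^ t - 1) + (x - x ^ t) * (y - y ^ t) := by
    have : 0 < (x * x ^ t - 1) * (y * y ^ t - 1) := mul_pos (by nlinarith) (by nlinarith)
    linarith
  have hxyk : 0 < (x * y) ^ k := by positivity
  have := mul_pos hxyk hfac
  simp only [pow_add, mul_pow] at this ⊢
  linarith [this]

theorem add_mul_geom_sum₂_lt {x y : ℝ} (hx : 1 < x) (hy : 1 < y) {k : ℕ} (hk : 0 < k) :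
    (x + y) * (x * y - 1) * ∑ j ∈ range k, x ^ j * y ^ (k - 1 - j) <
      (x * y + 1) * ((x * y) ^ k - 1) := by
  have hsum : 2 * ((x + y) * ∑ j ∈ range k, x ^ j * y ^ (k - 1 - j)) <
      2 * ((x * y + 1) * ∑ j ∈ range k, (x * y) ^ j) := by
    calc 2 * ((x + y) * ∑ j ∈ range k, x ^ j * y ^ (k - 1 - j))
        = ∑ j ∈ range k, (x + y) * (x ^ j * y ^ (k - 1 - j) + x ^ (k - 1 - j) * y ^ j) := by
          rw [← mul_sum, sum_add_distrib, ← geom_sum₂_comm y x k]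
          simp only [mul_comm (y ^ _)]
          ring
      _ < ∑ j ∈ range k, (x * y + 1) * ((x * y) ^ j + (x * y) ^ (k - 1 - j)) :=
          sum_lt_sum_of_nonempty (nonempty_range_iff.mpr hk.ne') fun j _ =>
            add_mul_pow_add_lt_mul_add_one_mul hx hy j (k - 1 - j)
      _ = 2 * ((x * y + 1) * ∑ j ∈ range k, (x * y) ^ j) := by
          rw [← mul_sum, sum_add_distrib, sum_range_reflect (fun j => (x * y) ^ j) k]
          ring
  have hxy : 0 < x * y - 1 := by nlinarith
  rw [← geom_sum_mul]
  nlinarith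

theorem pow_add_one_ne_zero_of_one_lt_norm {K : Type*} [NormedDivisionRing K] [CharZero K]
    {z : K} (hz : 1 < ‖z‖) (k : ℕ) : z ^ k + 1 ≠ 0 := by
  rcases Nat.eq_zero_or_pos k with rfl | hk
  · norm_num
  · intro h
    have := congrArg norm (eq_neg_of_add_eq_zero_left h)
    rw [norm_pow, norm_neg, norm_one] at this
    exact (one_lt_pow₀ hz hk.ne').ne' this

theorem norm_geom_sum₂_le {K : Type*} [NormedDivisionRing K] (x y : K) (k : ℕ) :
    ‖∑ j ∈ range k, x ^ j * y ^ (k - 1 - j)‖ ≤ ∑ j ∈ range k, ‖x‖ ^ j * ‖y‖ ^ (k - 1 - j) := by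
  simpa only [norm_mul, norm_pow] using norm_sum_le (range k) fun j => x ^ j * y ^ (k - 1 - j)

theorem ofReal_re_geom_sum₂_conj (z : ℂ) (k : ℕ) :
    ((∑ j ∈ range k, z ^ j * conj z ^ (k - 1 - j)).re : ℂ) =
      ∑ j ∈ range k, z ^ j * conj z ^ (k - 1 - j) := by
  rw [← Complex.conj_eq_iff_re, map_sum, ← geom_sum₂_comm]
  simp only [map_mul, map_pow, Complex.conj_conj, mul_comm]

theorem two_mul_re_mul_geom_sum₂_conj_lt {z : ℂ} (hz : 1 < ‖z‖) {k : ℕ} (hk : 0 < k) :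
    2 * z.re * (Complex.normSq z - 1) * (∑ j ∈ range k, z ^ j * conj z ^ (k - 1 - j)).re <
      (Complex.normSq z + 1) * (Complex.normSq z ^ k - 1) := by
  set r := ‖z‖
  set s := ∑ j ∈ range k, z ^ j * conj z ^ (k - 1 - j)
  have hsr : |s.re| ≤ ∑ j ∈ range k, r ^ j * r ^ (k - 1 - j) := by
    simpa only [Complex.norm_conj] using
      (Complex.abs_re_le_norm s).trans (norm_geom_sum₂_le z (conj z) k)
  have hre : |2 * z.re| ≤ r + r := by
    rw [abs_mul, abs_two, two_mul]; linarith [Complex.abs_re_le_norm z]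
  have hr : 0 ≤ r * r - 1 := by nlinarith
  rw [Complex.normSq_eq_norm_sq, sq]
  calc 2 * z.re * (r * r - 1) * s.re
      ≤ (r + r) * (r * r - 1) * ∑ j ∈ range k, r ^ j * r ^ (k - 1 - j) := by
        rw [mul_right_comm]
        refine (le_abs_self _).trans ?_
        rw [abs_mul, abs_mul, abs_of_nonneg hr, mul_right_comm]
        gcongr
    _ < (r * r + 1) * ((r * r) ^ k - 1) := add_mul_geom_sum₂_lt hz hz hk

theorem neg_of_sum_div_eq {I : Finset ι} {ν : ι → ℕ} {P a e : ℝ} {δ v : ℕ → ℝ} (hP : 1 < P)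
    (hδ : ∀ k, 0 < δ k) (hv : v 0 = 0)
    (hkey : ∀ k, 0 < k → a * (P - 1) * v k < (P + 1) * (P ^ k - 1))
    (hsum₁ : ∑ i ∈ I, (P ^ ν i - 1) / δ (ν i) = a * (1 - P⁻¹) - e)
    (hsum₂ : ∑ i ∈ I, v (ν i) / δ (ν i) = 1 + P⁻¹) :
    e < 0 := by
  have hP0 : P ≠ 0 := by positivity
  have hterm : ∀ i ∈ I, 0 ≤ ((P + 1) * (P ^ ν i - 1) - a * (P - 1) * v (ν i)) / δ (ν i) := by
    intro i _
    rcases Nat.eq_zero_or_pos (ν i) with h | h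
    · simp [h, hv]
    · exact div_nonneg (by linarith [hkey _ h]) (hδ _).le
  obtain ⟨i, hi, hvi⟩ : ∃ i ∈ I, v (ν i) / δ (ν i) ≠ 0 :=
    exists_ne_zero_of_sum_ne_zero (by rw [hsum₂]; positivity)
  have hνi : 0 < ν i := Nat.pos_of_ne_zero fun h => hvi (by simp [h, hv])
  have hpos : 0 < ∑ i ∈ I, ((P + 1) * (P ^ ν i - 1) - a * (P - 1) * v (ν i)) / δ (ν i) :=
    sum_pos' hterm ⟨i, hi, div_pos (by linarith [hkey _ hνi]) (hδ _)⟩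
  have hsum : ∑ i ∈ I, ((P + 1) * (P ^ ν i - 1) - a * (P - 1) * v (ν i)) / δ (ν i) =
      -(P + 1) * e := by
    calc _ = (P + 1) * ∑ i ∈ I, (P ^ ν i - 1) / δ (ν i) -
          a * (P - 1) * ∑ i ∈ I, v (ν i) / δ (ν i) := by
          rw [mul_sum, mul_sum, ← sum_sub_distrib]
          exact sum_congr rfl fun i _ => by ring
      _ = -(P + 1) * e := by
          rw [hsum₁, hsum₂]
          field_simp
          ring
  nlinarith

theorem pFun_eq_zero_of_aeval_pPoly_eq_zero [DecidableEq ι] {K R : Type*} [NormedField K]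
    [CharZero K] [CommRing R] [Algebra R K] {c : R} {I : Finset ι} {ν : ι → ℕ} {z : K}
    (h : aeval z (pPoly c I ν) = 0) (hz : 1 < ‖z‖) : pFun (algebraMap R K c) I ν z = 0 := by
  have hz0 : z ≠ 0 := norm_pos_iff.mp (by linarith)
  have hI : ∀ i ∈ I, z ^ ν i + 1 ≠ 0 := fun i _ => pow_add_one_ne_zero_of_one_lt_norm hz _
  rw [aeval_pPoly c hz0 hI] at h
  exact (mul_eq_zero.mp h).resolve_left (mul_ne_zero hz0 (prod_ne_zero_iff.mpr hI))

theorem inv_add_one_le_half {u : ℝ} (hu : 1 ≤ |u|) : (u + 1)⁻¹ ≤ 2⁻¹ := by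
  rcases le_abs'.mp hu with h | h
  · exact (inv_nonpos.mpr (by linarith)).trans (by norm_num)
  · exact inv_anti₀ two_pos (by linarith)

section Real

variable {c : ℝ} {I : Finset ι} {ν : ι → ℕ}

theorem pFun_neg_of_lt_neg_one (hc : #I ≤ 2 * c) {t : ℝ} (ht : t < -1) :
    pFun c I ν t < 0 := by
  have hsum : ∑ i ∈ I, (t ^ ν i + 1)⁻¹ ≤ #I • 2⁻¹ := sum_le_card_nsmul I _ _ fun i _ =>
    inv_add_one_le_half (by rw [abs_pow]; exact one_le_pow₀ (by rw [abs_of_neg] <;> linarith))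
  have hinv : -1 < t⁻¹ := by
    have := inv_lt_one_of_one_lt₀ (by linarith : 1 < -t)
    rw [inv_neg] at this
    linarith
  rw [nsmul_eq_mul] at hsum
  unfold pFun
  linarith

theorem eq_of_pFun_eq_zero (hc : #I ≤ 2 * c) {s t : ℝ} (hs : pFun c I ν s = 0)
    (ht : pFun c I ν t = 0) (hs1 : 1 < s) (ht1 : 1 < t) : s = t := by
  by_contra hst
  have hsI : ∀ i ∈ I, s ^ ν i + 1 ≠ 0 := fun i _ => by positivity
  have htI : ∀ i ∈ I, t ^ ν i + 1 ≠ 0 := fun i _ => by positivity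
  have := neg_of_sum_div_eq (δ := fun k => (s ^ k + 1) * (t ^ k + 1))
    (v := fun k => ∑ j ∈ range k, s ^ j * t ^ (k - 1 - j)) (by nlinarith)
    (fun k => by positivity)
    (by simp) (fun k hk => add_mul_geom_sum₂_lt hs1 ht1 hk)
    (sum_mul_pow_sub_one_div_of_pFun_eq_zero hs ht (by positivity) (by positivity) hsI htI)
    (sum_geom_sum₂_div_of_pFun_eq_zero hs ht (by positivity) (by positivity) hsI htI hst)
  linarith

theorem im_eq_zero_of_pFun_eq_zero (hc : #I ≤ 2 * c) {z : ℂ} (hz : pFun (c : ℂ) I ν z = 0)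
    (hz1 : 1 < ‖z‖) : z.im = 0 := by
  by_contra him
  have hzc : pFun (c : ℂ) I ν (conj z) = 0 := by
    rw [← Complex.conj_ofReal, ← map_pFun, hz, map_zero]
  have hz0 : z ≠ 0 := norm_pos_iff.mp (by linarith)
  have hzI : ∀ i ∈ I, z ^ ν i + 1 ≠ 0 := fun i _ => pow_add_one_ne_zero_of_one_lt_norm hz1 _
  have hzcI : ∀ i ∈ I, conj z ^ ν i + 1 ≠ 0 := fun i _ =>
    pow_add_one_ne_zero_of_one_lt_norm (by rwa [Complex.norm_conj]) _
  have hne : z ≠ conj z := fun h => him (Complex.conj_eq_iff_im.mp h.symm)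
  have h₁ := sum_mul_pow_sub_one_div_of_pFun_eq_zero hz hzc hz0 (by simpa using hz0) hzI hzcI
  have h₂ := sum_geom_sum₂_div_of_pFun_eq_zero hz hzc hz0 (by simpa using hz0) hzI hzcI hne
  have hδ : ∀ k : ℕ, (z ^ k + 1) * (conj z ^ k + 1) = Complex.normSq (z ^ k + 1) := by
    simpa using fun k : ℕ => Complex.mul_conj (z ^ k + 1)
  simp only [Complex.mul_conj, Complex.add_conj, hδ] at h₁ h₂
  have := neg_of_sum_div_eq (δ := fun k => Complex.normSq (z ^ k + 1))
    (v := fun k => (∑ j ∈ range k, z ^ j * conj z ^ (k - 1 - j)).re)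
    (by rw [Complex.normSq_eq_norm_sq]; nlinarith)
    (fun k => Complex.normSq_pos.mpr (pow_add_one_ne_zero_of_one_lt_norm hz1 k)) (by simp)
    (fun k hk => two_mul_re_mul_geom_sum₂_conj_lt hz1 hk) (by exact_mod_cast h₁)
    (Complex.ofReal_injective (by push_cast; simpa only [ofReal_re_geom_sum₂_conj] using h₂))
  linarith

theorem exists_one_lt_eq_ofReal_of_pFun_eq_zero (hc : #I ≤ 2 * c) {z : ℂ}
    (hz : pFun (c : ℂ) I ν z = 0) (hz1 : 1 < ‖z‖) :
    ∃ t : ℝ, 1 < t ∧ pFun c I ν t = 0 ∧ z = t := by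
  have hzt : z = z.re := Complex.ext rfl (by simp [im_eq_zero_of_pFun_eq_zero hc hz hz1])
  have ht : pFun c I ν z.re = 0 := Complex.ofReal_injective <| by
    simpa [← hzt, hz] using map_pFun Complex.ofRealHom c I ν z.re
  refine ⟨z.re, ?_, ht, hzt⟩
  rw [hzt, Complex.norm_real, Real.norm_eq_abs] at hz1
  rcases lt_abs.mp hz1 with h | h
  · exact h
  · exact absurd ht (pFun_neg_of_lt_neg_one hc (by linarith)).ne

end Real

theorem stmt16_general (d m : ℕ) (hd : 1 ≤ d) (hm2 : m ≤ 2*d - 1)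
    (n : ℕ → ℕ) :
    (∀ z w : ℂ,
      aeval z ((X^2 - C ((d : ℝ) - 1) * X - 1) * ∏ i ∈ Finset.Icc 2 m, (X^(n i) + 1)
        + X * ∑ i ∈ Finset.Icc 2 m, ∏ j ∈ (Finset.Icc 2 m).erase i, (X^(n j) + 1)) = 0 →
      aeval w ((X^2 - C ((d : ℝ) - 1) * X - 1) * ∏ i ∈ Finset.Icc 2 m, (X^(n i) + 1)
        + X * ∑ i ∈ Finset.Icc 2 m, ∏ j ∈ (Finset.Icc 2 m).erase i, (X^(n j) + 1)) = 0 →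
      1 < ‖z‖ → 1 < ‖w‖ → z = w) ∧
    (∀ z : ℂ,
      aeval z ((X^2 - C ((d : ℝ) - 1) * X - 1) * ∏ i ∈ Finset.Icc 2 m, (X^(n i) + 1)
        + X * ∑ i ∈ Finset.Icc 2 m, ∏ j ∈ (Finset.Icc 2 m).erase i, (X^(n j) + 1)) = 0 →
      1 < ‖z‖ → z.im = 0) := by
  have hc : (#(Icc 2 m) : ℝ) ≤ 2 * ((d : ℝ) - 1) := by
    have : #(Icc 2 m) + 2 ≤ 2 * d := by rw [Nat.card_Icc]; omega
    have : (#(Icc 2 m) : ℝ) + 2 ≤ 2 * d := by exact_mod_cast this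
    linarith
  have hreal : ∀ z : ℂ, aeval z (pPoly ((d : ℝ) - 1) (Icc 2 m) n) = 0 → 1 < ‖z‖ →
      ∃ t : ℝ, 1 < t ∧ pFun ((d : ℝ) - 1) (Icc 2 m) n t = 0 ∧ z = t := fun z h hz =>
    exists_one_lt_eq_ofReal_of_pFun_eq_zero hc
      (by simpa using pFun_eq_zero_of_aeval_pPoly_eq_zero h hz) hz
  refine ⟨fun z w hz hw hz1 hw1 => ?_, fun z hz hz1 => ?_⟩
  · obtain ⟨s, hs1, hs, rfl⟩ := hreal z hz hz1
    obtain ⟨t, ht1, ht, rfl⟩ := hreal w hw hw1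
    rw [eq_of_pFun_eq_zero hc hs ht hs1 ht1]
  · obtain ⟨t, -, -, rfl⟩ := hreal z hz hz1
    exact Complex.ofReal_im t

/-- For `d ≥ 1`, `1 ≤ m ≤ 2d−1` and any tuple `n̲ = (n₂,…,n_m)`, the polynomial
`p_{d,n̲}(X) = (X² − (d−1)X − 1)·∏_{i=2}^{m}(X^{n_i}+1) + X·∑_{i=2}^{m}∏_{j≠i}(X^{n_j}+1)`
has at most one complex root of modulus strictly larger than `1`, and such a root
is real. -/
theorem stmt16 (d m : ℕ) (hd : 1 ≤ d) (hm1 : 1 ≤ m) (hm2 : m ≤ 2*d - 1)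
    (n : ℕ → ℕ) :
    (∀ z w : ℂ,
      aeval z ((X^2 - C ((d : ℝ) - 1) * X - 1) * ∏ i ∈ Finset.Icc 2 m, (X^(n i) + 1)
        + X * ∑ i ∈ Finset.Icc 2 m, ∏ j ∈ (Finset.Icc 2 m).erase i, (X^(n j) + 1)) = 0 →
      aeval w ((X^2 - C ((d : ℝ) - 1) * X - 1) * ∏ i ∈ Finset.Icc 2 m, (X^(n i) + 1)
        + X * ∑ i ∈ Finset.Icc 2 m, ∏ j ∈ (Finset.Icc 2 m).erase i, (X^(n j) + 1)) = 0 →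
      1 < ‖z‖ → 1 < ‖w‖ → z = w) ∧
    (∀ z : ℂ,
      aeval z ((X^2 - C ((d : ℝ) - 1) * X - 1) * ∏ i ∈ Finset.Icc 2 m, (X^(n i) + 1)
        + X * ∑ i ∈ Finset.Icc 2 m, ∏ j ∈ (Finset.Icc 2 m).erase i, (X^(n j) + 1)) = 0 →
      1 < ‖z‖ → z.im = 0) :=
  stmt16_general d m hd hm2 n
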